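/- In the design setup, suppose the design is uniform on its q support points: D₊ = k·I_q for an integer k ≥ 1 (so n = kq). Then for every ν ∈ [0,1] and every n×n symmetric positive definite matrix P with QᵀUQ invertible, I_ν(ξ, I_n) ≤ I_ν(ξ, P); i.e., P = I_n is a minimax precision matrix and ordinary least squares is minimax within the class of generalized least squares methods. Moreover, if P₀ = α·J₊D₊⁻²J₊ᵀ (α = n/tr(D₊⁻¹)) equals I_n, then q = n and D₊ = I_n, so the design is uniform on its support. -/

import Mathlib

/-!
Put `T = JQ = J₊Q₊` and write a GLS method with precision `P` as the left inverse
`L = (TᵀPT)⁻¹TᵀP` of `T`. Then `I₀(ξ,P) = tr(LLᵀ)` and `I₁(ξ,P) = λmax((LJ₊)(LJ₊)ᵀ)`, since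
`JJᵀ = J₊J₊ᵀ`. Both `L` and `LJ₊` are left inverses (of `T` and of `Q₊` respectively), so the
Gauss–Markov inequality bounds `LLᵀ` below by `(TᵀT)⁻¹` and `(LJ₊)(LJ₊)ᵀ` below by `(Q₊ᵀQ₊)⁻¹`
in the Loewner order. For OLS (`P = I`) both bounds are attained: `L` is then the OLS map of
`T`, and because `J₊ᵀJ₊ = k·I` the map `LJ₊` is the OLS map of `Q₊`.

For the second claim, `P₀ = J₊J₊ᵀ` when `D₊ = k·I`; if this is `Iₙ` then `D₊ = J₊ᵀJ₊` is an
invertible idempotent, hence `I_q`, and comparing traces gives `q = n`.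
-/

open Matrix

/-- The largest eigenvalue of a real square matrix (for the symmetric matrices
considered here the set of eigenvalues is finite and nonempty, and `sSup`
yields its maximum). -/
noncomputable def lmax {m : ℕ} (A : Matrix (Fin m) (Fin m) ℝ) : ℝ :=
  sSup {r : ℝ | ∃ v : Fin m → ℝ, v ≠ 0 ∧ A.mulVec v = r • v}

open scoped MatrixOrder

lemma lmax_eq_sSup_spectrum {m : ℕ} (A : Matrix (Fin m) (Fin m) ℝ) :
    lmax A = sSup (spectrum ℝ A) := by
  rw [lmax, ← spectrum_toLin']
  congr 1
  ext r
  rw [← Module.End.hasEigenvalue_iff_mem_spectrum]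
  constructor
  · rintro ⟨v, hv, hAv⟩
    exact Module.End.hasEigenvalue_of_hasEigenvector
      ⟨Module.End.mem_eigenspace_iff.2 (by simpa using hAv), hv⟩
  · intro h
    obtain ⟨v, hv⟩ := h.exists_hasEigenvector
    exact ⟨v, hv.2, by simpa using Module.End.mem_eigenspace_iff.1 hv.1⟩

lemma lmax_mono {m : ℕ} {A B : Matrix (Fin m) (Fin m) ℝ} (hB : B.IsHermitian) (hAB : A ≤ B) :
    lmax A ≤ lmax B := by
  rcases isEmpty_or_nonempty (Fin m) with hm | hm
  · rw [Subsingleton.elim A B]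
  have hA : A.IsHermitian := by simpa using hB.sub hAB.isHermitian
  have hspec {C : Matrix (Fin m) (Fin m) ℝ} (hC : C.IsHermitian) :
      (spectrum ℝ C).Nonempty ∧ BddAbove (spectrum ℝ C) := by
    rw [hC.spectrum_real_eq_range_eigenvalues]
    exact ⟨Set.range_nonempty _, (Set.finite_range _).bddAbove⟩
  have hB_le : B ≤ algebraMap ℝ _ (lmax B) := by
    rw [lmax_eq_sSup_spectrum]
    exact le_algebraMap_of_spectrum_le (fun x hx ↦ le_csSup (hspec hB).2 hx) hB
  rw [lmax_eq_sSup_spectrum A]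
  exact csSup_le (hspec hA).1 ((le_algebraMap_iff_spectrum_le hA).1 (hAB.trans hB_le))

/-- `gls T P * y` is the generalized least squares estimate for design matrix `T` and
precision matrix `P`; `gls T 1` is ordinary least squares. -/
noncomputable def gls {n p : Type*} [Fintype n] [Fintype p] [DecidableEq p]
    (T : Matrix n p ℝ) (P : Matrix n n ℝ) : Matrix p n ℝ :=
  (Tᵀ * P * T)⁻¹ * Tᵀ * P

section GeneralizedLeastSquares

variable {m n p : Type*} [Fintype m] [Fintype n] [Fintype p] [DecidableEq n] [DecidableEq p]
  {T : Matrix n p ℝ}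

omit [DecidableEq n] in
lemma gls_mul_self {P : Matrix n n ℝ} (hU : IsUnit (Tᵀ * P * T).det) : gls T P * T = 1 := by
  rw [gls, Matrix.mul_assoc, Matrix.mul_assoc, ← Matrix.mul_assoc Tᵀ, nonsing_inv_mul _ hU]

lemma gls_one : gls T 1 = (Tᵀ * T)⁻¹ * Tᵀ := by
  simp [gls]

lemma mul_transpose_gls_one {L : Matrix p n ℝ} (hLT : L * T = 1) :
    L * (gls T 1)ᵀ = (Tᵀ * T)⁻¹ := by
  rw [gls_one, transpose_mul, transpose_nonsing_inv, transpose_mul, transpose_transpose,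
    ← Matrix.mul_assoc, hLT, Matrix.one_mul]

lemma gls_one_mul_transpose (hT : IsUnit (Tᵀ * T).det) :
    gls T 1 * (gls T 1)ᵀ = (Tᵀ * T)⁻¹ :=
  mul_transpose_gls_one (gls_mul_self (by simpa using hT))

/-- The Gauss–Markov inequality. -/
theorem inv_transpose_mul_self_le_mul_transpose (hT : IsUnit (Tᵀ * T).det) {L : Matrix p n ℝ}
    (hLT : L * T = 1) : (Tᵀ * T)⁻¹ ≤ L * Lᵀ := by
  set O := gls T 1
  have hLO : L * Oᵀ = (Tᵀ * T)⁻¹ := mul_transpose_gls_one hLT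
  have hOL : O * Lᵀ = (Tᵀ * T)⁻¹ := by
    rw [← transpose_transpose (O * Lᵀ), transpose_mul, transpose_transpose, hLO,
      transpose_nonsing_inv, transpose_mul, transpose_transpose]
  have hdiff : L * Lᵀ - (Tᵀ * T)⁻¹ = (L - O) * (L - O)ᵀ := by
    rw [transpose_sub, Matrix.sub_mul, Matrix.mul_sub, Matrix.mul_sub, hLO, hOL,
      gls_one_mul_transpose hT]
    abel
  rw [le_iff, hdiff, ← conjTranspose_eq_transpose_of_trivial]
  exact posSemidef_self_mul_conjTranspose _

lemma gls_one_mul_transpose_le (hT : IsUnit (Tᵀ * T).det) {P : Matrix n n ℝ}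
    (hU : IsUnit (Tᵀ * P * T).det) : gls T 1 * (gls T 1)ᵀ ≤ gls T P * (gls T P)ᵀ :=
  gls_one_mul_transpose hT ▸ inv_transpose_mul_self_le_mul_transpose hT (gls_mul_self hU)

omit [DecidableEq n] in
lemma gls_mul_mul_transpose {P : Matrix n n ℝ} (hP : Pᵀ = P) (A : Matrix n m ℝ) :
    gls T P * A * (gls T P * A)ᵀ =
      (Tᵀ * P * T)⁻¹ * (Tᵀ * P * (A * Aᵀ) * P * T) * (Tᵀ * P * T)⁻¹ := by
  simp only [gls, transpose_mul, transpose_nonsing_inv, transpose_transpose, hP,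
    Matrix.mul_assoc]

end GeneralizedLeastSquares

lemma mul_eq_submatrix_mul_submatrix {l N ι o R : Type*} [Fintype N] [Fintype ι]
    [NonUnitalNonAssocSemiring R] (J : Matrix l N R) (M : Matrix N o R) (e : ι ↪ N)
    (hJ : ∀ j ∉ Set.range e, ∀ i, J i j = 0) : J * M = J.submatrix id e * M.submatrix e id := by
  ext i j
  simp only [mul_apply, submatrix_apply, id]
  exact (Fintype.sum_of_injective e e.injective _ _ (fun x hx ↦ by simp [hJ x hx])
    fun _ ↦ rfl).symm

section Design

variable {n N m p : Type*} [Fintype n] [Fintype N] [Fintype m] [Fintype p] [DecidableEq n]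
  [DecidableEq p] (J : Matrix n N ℝ) (Q : Matrix N p ℝ) {P : Matrix n n ℝ}

lemma inv_mul_mul_inv_eq_gls_mul_transpose (hP : Pᵀ = P) :
    (Qᵀ * (Jᵀ * P * J) * Q)⁻¹ * (Qᵀ * (Jᵀ * P * P * J) * Q) * (Qᵀ * (Jᵀ * P * J) * Q)⁻¹ =
      gls (J * Q) P * (gls (J * Q) P)ᵀ := by
  have h := gls_mul_mul_transpose (T := J * Q) hP (1 : Matrix n n ℝ)
  simp only [Matrix.mul_one, transpose_one, transpose_mul, Matrix.mul_assoc] at h ⊢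
  exact h.symm

omit [DecidableEq n] in
lemma inv_mul_sq_mul_inv_eq_gls_mul_mul_transpose (hP : Pᵀ = P) {A : Matrix n m ℝ}
    (hA : J * Jᵀ = A * Aᵀ) :
    (Qᵀ * (Jᵀ * P * J) * Q)⁻¹ * (Qᵀ * ((Jᵀ * P * J) * (Jᵀ * P * J)) * Q)
        * (Qᵀ * (Jᵀ * P * J) * Q)⁻¹ = gls (J * Q) P * A * (gls (J * Q) P * A)ᵀ := by
  rw [gls_mul_mul_transpose hP, ← hA]
  simp only [transpose_mul, Matrix.mul_assoc]

end Design

lemma smul_inv_mul_inv_eq_one {ι : Type*} [Fintype ι] [DecidableEq ι] {c : ℝ} (hc : c ≠ 0)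
    {D : Matrix ι ι ℝ} (hD : D = c • 1) :
    (c * Fintype.card ι / trace D⁻¹) • (D⁻¹ * D⁻¹) = 1 := by
  rcases isEmpty_or_nonempty ι with hι | hι
  · exact Subsingleton.elim _ _
  have hinv : D⁻¹ = c⁻¹ • 1 := by
    let := invertibleOfNonzero hc
    simpa [hD] using inv_smul (1 : Matrix ι ι ℝ) c (by simp)
  have hcard : (Fintype.card ι : ℝ) ≠ 0 := by positivity
  rw [hinv, trace_smul, trace_one, smul_mul_smul, Matrix.one_mul, smul_smul, smul_eq_mul]
  field_simp
  simp

section Replication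

variable {n q p : Type*} [Fintype n] [Fintype q] [Fintype p] [DecidableEq n] [DecidableEq q]
  [DecidableEq p] {M : Matrix n q ℝ} {k : ℝ}

omit [Fintype p] [DecidableEq n] [DecidableEq p] in
lemma transpose_mul_self_mul_eq_smul (hM : Mᵀ * M = k • 1) (R : Matrix q p ℝ) :
    (M * R)ᵀ * (M * R) = k • (Rᵀ * R) := by
  rw [transpose_mul, Matrix.mul_assoc, ← Matrix.mul_assoc Mᵀ, hM, Matrix.smul_mul,
    Matrix.one_mul, Matrix.mul_smul]

lemma gls_one_mul_of_transpose_mul_self_eq_smul (hM : Mᵀ * M = k • 1) (hk : k ≠ 0)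
    {R : Matrix q p ℝ} (hR : IsUnit (Rᵀ * R).det) : gls (M * R) 1 * M = gls R 1 := by
  have hinv : (k • (Rᵀ * R))⁻¹ = k⁻¹ • (Rᵀ * R)⁻¹ := by
    let := invertibleOfNonzero hk
    simpa using inv_smul _ k hR
  rw [gls_one, gls_one, transpose_mul_self_mul_eq_smul hM, transpose_mul, Matrix.mul_assoc,
    Matrix.mul_assoc, hM, hinv, Matrix.mul_smul, Matrix.mul_one, Matrix.smul_mul,
    Matrix.mul_smul, smul_smul, inv_mul_cancel₀ hk, one_smul]

omit [DecidableEq n] in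
lemma isUnit_det_transpose_mul_self_mul (hM : Mᵀ * M = k • 1) (hk : k ≠ 0) {R : Matrix q p ℝ}
    (hR : IsUnit (Rᵀ * R).det) : IsUnit ((M * R)ᵀ * (M * R)).det := by
  rw [transpose_mul_self_mul_eq_smul hM, det_smul]
  exact (isUnit_iff_ne_zero.2 (pow_ne_zero _ hk)).mul hR

lemma gls_one_mul_mul_transpose_le (hM : Mᵀ * M = k • 1) (hk : k ≠ 0) {R : Matrix q p ℝ}
    (hR : IsUnit (Rᵀ * R).det) {P : Matrix n n ℝ} (hU : IsUnit ((M * R)ᵀ * P * (M * R)).det) :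
    gls (M * R) 1 * M * (gls (M * R) 1 * M)ᵀ ≤ gls (M * R) P * M * (gls (M * R) P * M)ᵀ := by
  rw [gls_one_mul_of_transpose_mul_self_eq_smul hM hk hR, gls_one_mul_transpose hR]
  exact inv_transpose_mul_self_le_mul_transpose hR (by rw [Matrix.mul_assoc, gls_mul_self hU])

omit [Fintype p] [DecidableEq p] in
lemma transpose_mul_self_eq_one (hM : M * Mᵀ = 1) (hD : IsUnit (Mᵀ * M).det) : Mᵀ * M = 1 := by
  have hidem : IsIdempotentElem (Mᵀ * M) := by
    rw [IsIdempotentElem, Matrix.mul_assoc, ← Matrix.mul_assoc M, hM, Matrix.one_mul]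
  exact (IsIdempotentElem.iff_eq_one_of_isUnit ((isUnit_iff_isUnit_det _).2 hD)).1 hidem

omit [Fintype p] [DecidableEq p] in
lemma card_eq_of_mul_transpose_eq_one (hM : M * Mᵀ = 1) (hM' : Mᵀ * M = 1) :
    Fintype.card q = Fintype.card n := by
  have htr := congrArg trace hM'
  rwa [trace_mul_comm, hM, trace_one, trace_one, eq_comm, Nat.cast_inj] at htr

omit [Fintype p] [DecidableEq p] in
lemma card_eq_and_transpose_mul_self_eq_one {c : ℝ} (hM : Mᵀ * M = c • 1) (hc : c ≠ 0)
    (h : (c * Fintype.card q / trace (Mᵀ * M)⁻¹) • (M * ((Mᵀ * M)⁻¹ * (Mᵀ * M)⁻¹) * Mᵀ) = 1) :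
    Fintype.card q = Fintype.card n ∧ Mᵀ * M = 1 := by
  have hMM : M * Mᵀ = 1 := by
    rwa [← Matrix.smul_mul, ← Matrix.mul_smul, smul_inv_mul_inv_eq_one hc hM, Matrix.mul_one]
      at h
  have hdet : IsUnit (Mᵀ * M).det := by
    rw [hM, det_smul, det_one, mul_one]
    exact isUnit_iff_ne_zero.2 (pow_ne_zero _ hc)
  have hD1 := transpose_mul_self_eq_one hMM hdet
  exact ⟨card_eq_of_mul_transpose_eq_one hMM hD1, hD1⟩

end Replication

theorem uniform_design_ols_minimax_general (N n p q : ℕ) (Q : Matrix (Fin N) (Fin p) ℝ)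
    (J : Matrix (Fin n) (Fin N) ℝ)
    (e : Fin q ↪ Fin N)
    (hsupp : ∀ j, j ∉ Set.range ⇑e → ∀ i, J i j = 0)
    (Jp : Matrix (Fin n) (Fin q) ℝ) (hJp : ∀ i k, Jp i k = J i (e k))
    (Qp : Matrix (Fin q) (Fin p) ℝ) (hQp : ∀ k j, Qp k j = Q (e k) j)
    (Dp : Matrix (Fin q) (Fin q) ℝ) (hDp : Dp = Jpᵀ * Jp)
    (hQpQp : IsUnit (Qpᵀ * Qp).det)
    (k : ℕ) (hk : 1 ≤ k) (hn : n = k * q)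
    (hunif : Dp = (k : ℝ) • (1 : Matrix (Fin q) (Fin q) ℝ))
    (I0f I1f : Matrix (Fin n) (Fin n) ℝ → ℝ)
    (hI0f : ∀ P : Matrix (Fin n) (Fin n) ℝ, I0f P =
      Matrix.trace ((Qᵀ * (Jᵀ * P * J) * Q)⁻¹ * (Qᵀ * (Jᵀ * P * P * J) * Q)
        * (Qᵀ * (Jᵀ * P * J) * Q)⁻¹))
    (hI1f : ∀ P : Matrix (Fin n) (Fin n) ℝ, I1f P =
      lmax ((Qᵀ * (Jᵀ * P * J) * Q)⁻¹ * (Qᵀ * ((Jᵀ * P * J) * (Jᵀ * P * J)) * Q)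
        * (Qᵀ * (Jᵀ * P * J) * Q)⁻¹)) :
    (∀ ν : ℝ, ν ∈ Set.Icc (0 : ℝ) 1 →
      ∀ P : Matrix (Fin n) (Fin n) ℝ, P.PosDef →
        IsUnit (Qᵀ * (Jᵀ * P * J) * Q).det →
        (1 - ν) * I0f 1 + ν * I1f 1 ≤ (1 - ν) * I0f P + ν * I1f P) ∧
    (∀ (α : ℝ) (P₀ : Matrix (Fin n) (Fin n) ℝ),
      α = (n : ℝ) / Matrix.trace Dp⁻¹ →
      P₀ = α • (Jp * (Dp⁻¹ * Dp⁻¹) * Jpᵀ) →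
      P₀ = 1 → q = n ∧ Dp = 1) := by
  have hk0 : (k : ℝ) ≠ 0 := Nat.cast_ne_zero.2 (Nat.one_le_iff_ne_zero.1 hk)
  have hDk : Jpᵀ * Jp = (k : ℝ) • 1 := hDp ▸ hunif
  have hJp' : Jp = J.submatrix id e := by ext; exact hJp _ _
  have hT : J * Q = Jp * Qp := by
    rw [hJp', show Qp = Q.submatrix e id by ext; exact hQp _ _]
    exact mul_eq_submatrix_mul_submatrix J Q e hsupp
  have hJJ : J * Jᵀ = Jp * Jpᵀ := by
    rw [hJp', mul_eq_submatrix_mul_submatrix J Jᵀ e hsupp, transpose_submatrix]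
  refine ⟨fun ν hν P hP hU ↦ ?_, fun α P₀ hα hP₀ hP₁ ↦ ?_⟩
  · have hPs : Pᵀ = P := conjTranspose_eq_transpose_of_trivial P ▸ hP.isHermitian
    have hU' : IsUnit ((Jp * Qp)ᵀ * P * (Jp * Qp)).det := by
      rw [← hT]
      simpa only [transpose_mul, Matrix.mul_assoc] using hU
    have h0 : I0f 1 ≤ I0f P := by
      rw [hI0f, hI0f, inv_mul_mul_inv_eq_gls_mul_transpose J Q transpose_one,
        inv_mul_mul_inv_eq_gls_mul_transpose J Q hPs, hT]
      exact OrderHomClass.mono (tracePositiveLinearMap _ ℝ ℝ) (gls_one_mul_transpose_le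
        (isUnit_det_transpose_mul_self_mul hDk hk0 hQpQp) hU')
    have h1 : I1f 1 ≤ I1f P := by
      rw [hI1f, hI1f, inv_mul_sq_mul_inv_eq_gls_mul_mul_transpose J Q transpose_one hJJ,
        inv_mul_sq_mul_inv_eq_gls_mul_mul_transpose J Q hPs hJJ, hT]
      exact lmax_mono (conjTranspose_eq_transpose_of_trivial (gls (Jp * Qp) P * Jp) ▸
        isHermitian_mul_conjTranspose_self _) (gls_one_mul_mul_transpose_le hDk hk0 hQpQp hU')
    have hν' : 0 ≤ 1 - ν := sub_nonneg.2 hν.2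
    have hν0 : 0 ≤ ν := hν.1
    gcongr
  · subst hα hP₀ hDp
    rw [show (n : ℝ) = k * Fintype.card (Fin q) by simp [hn]] at hP₁
    obtain ⟨hcard, hD1⟩ := card_eq_and_transpose_mul_self_eq_one hDk hk0 hP₁
    exact ⟨by simpa using hcard, hD1⟩

/-- If the design is uniform on its `q` support points
(`D₊ = k·I_q`, `n = kq`), then for every `ν ∈ [0,1]` and every symmetric
positive definite `P`, `I_ν(ξ,Iₙ) ≤ I_ν(ξ,P)`: `P = Iₙ` is a minimax precision
matrix, i.e. OLS is minimax among GLS methods. Moreover if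
`P₀ = α·J₊D₊⁻²J₊ᵀ = Iₙ` then `q = n` and `D₊ = I`, so the design is uniform on
its support. -/
theorem uniform_design_ols_minimax (N n p q : ℕ) (hp : 0 < p) (hpq : p ≤ q)
    (hqn : q ≤ n) (hqN : q ≤ N)
    (Q : Matrix (Fin N) (Fin p) ℝ) (hQ : Qᵀ * Q = 1)
    (J : Matrix (Fin n) (Fin N) ℝ)
    (hJ : ∀ i, ∃ j₀, ∀ j, J i j = if j = j₀ then (1 : ℝ) else 0)
    (e : Fin q ↪ Fin N)
    (hsupp : ∀ j, j ∉ Set.range ⇑e → ∀ i, J i j = 0)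
    (hpos : ∀ k, ∃ i, J i (e k) = 1)
    (Jp : Matrix (Fin n) (Fin q) ℝ) (hJp : ∀ i k, Jp i k = J i (e k))
    (Qp : Matrix (Fin q) (Fin p) ℝ) (hQp : ∀ k j, Qp k j = Q (e k) j)
    (Dp : Matrix (Fin q) (Fin q) ℝ) (hDp : Dp = Jpᵀ * Jp)
    (hQpQp : IsUnit (Qpᵀ * Qp).det)
    (k : ℕ) (hk : 1 ≤ k) (hn : n = k * q)
    (hunif : Dp = (k : ℝ) • (1 : Matrix (Fin q) (Fin q) ℝ))
    (I0f I1f : Matrix (Fin n) (Fin n) ℝ → ℝ)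
    (hI0f : ∀ P : Matrix (Fin n) (Fin n) ℝ, I0f P =
      Matrix.trace ((Qᵀ * (Jᵀ * P * J) * Q)⁻¹ * (Qᵀ * (Jᵀ * P * P * J) * Q)
        * (Qᵀ * (Jᵀ * P * J) * Q)⁻¹))
    (hI1f : ∀ P : Matrix (Fin n) (Fin n) ℝ, I1f P =
      lmax ((Qᵀ * (Jᵀ * P * J) * Q)⁻¹ * (Qᵀ * ((Jᵀ * P * J) * (Jᵀ * P * J)) * Q)
        * (Qᵀ * (Jᵀ * P * J) * Q)⁻¹)) :
    (∀ ν : ℝ, ν ∈ Set.Icc (0 : ℝ) 1 →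
      ∀ P : Matrix (Fin n) (Fin n) ℝ, P.PosDef →
        IsUnit (Qᵀ * (Jᵀ * P * J) * Q).det →
        (1 - ν) * I0f 1 + ν * I1f 1 ≤ (1 - ν) * I0f P + ν * I1f P) ∧
    (∀ (α : ℝ) (P₀ : Matrix (Fin n) (Fin n) ℝ),
      α = (n : ℝ) / Matrix.trace Dp⁻¹ →
      P₀ = α • (Jp * (Dp⁻¹ * Dp⁻¹) * Jpᵀ) →
      P₀ = 1 → q = n ∧ Dp = 1) :=
  uniform_design_ols_minimax_general N n p q Q J e hsupp Jp hJp Qp hQp Dp hDp hQpQp k hk hn hunif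
    I0f I1f hI0f hI1f
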